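/- arXiv:1905.12067 — 4 statements merged into one kernel-verified Lean document; each statement's English description precedes it below -/
import Mathlib

section
/- Let a < b be real numbers, let u and β be continuous real-valued functions on [a,b] with β(t) ≥ 0 for all t ∈ [a,b], and let α be a real-valued function integrable on [a,b]. If u(t) ≤ α(t) + ∫_a^t β(s) u(s) ds for all t ∈ [a,b], then u(t) ≤ α(t) + ∫_a^t α(s) β(s) exp(∫_s^t β(r) dr) ds for all t ∈ [a,b]. -/
/-!
With `B x = ∫_a^x β` and `v x = ∫_a^x β u`, the hypothesis says `v' = β u ≤ β α + β v`, so the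
integrating factor gives `(e^{-B} v)' = e^{-B} β (u - v) ≤ e^{-B} α β`. Integrating from `a`
(where `v` vanishes) to `t` and multiplying by `e^{B t}` bounds `v t` by
`∫_a^t α β e^{∫_s^t β}`, and `u t ≤ α t + v t`.
-/

open MeasureTheory Set

namespace Gronwall

variable {a b t x : ℝ} {f u α β : ℝ → ℝ}

theorem hasDerivAt_integral_of_continuousOn (hf : ContinuousOn f (Icc a b)) (hx : x ∈ Ioo a b) :
    HasDerivAt (fun y => ∫ s in a..y, f s) (f x) x :=
  intervalIntegral.integral_hasDerivAt_right
    ((hf.mono (uIcc_of_le hx.1.le ▸ Icc_subset_Icc le_rfl hx.2.le)).intervalIntegrable)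
    ((hf.mono Ioo_subset_Icc_self).stronglyMeasurableAtFilter isOpen_Ioo x hx)
    (hf.continuousAt (Icc_mem_nhds hx.1 hx.2))

theorem continuousOn_integral_of_continuousOn (hab : a ≤ b) (hf : ContinuousOn f (Icc a b)) :
    ContinuousOn (fun y => ∫ s in a..y, f s) (Icc a b) := by
  rw [← uIcc_of_le hab] at hf ⊢
  exact intervalIntegral.continuousOn_primitive_interval hf.integrableOn_Icc

theorem hasDerivAt_exp_neg_mul {B v : ℝ → ℝ} {B' v' : ℝ} (hB : HasDerivAt B B' x)
    (hv : HasDerivAt v v' x) :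
    HasDerivAt (fun y => Real.exp (-B y) * v y) (Real.exp (-B x) * (v' - B' * v x)) x := by
  refine (hB.fun_neg.exp.mul hv).congr_deriv ?_
  ring

theorem exp_integral_mul_integral_mul_exp_neg_integral (g : ℝ → ℝ)
    (hβ : IntervalIntegrable β volume a t) :
    Real.exp (∫ r in a..t, β r) * ∫ s in a..t, g s * Real.exp (-∫ r in a..s, β r) =
      ∫ s in a..t, g s * Real.exp (∫ r in s..t, β r) := by
  rw [← intervalIntegral.integral_const_mul]
  refine intervalIntegral.integral_congr fun s hs => ?_
  rw [← intervalIntegral.integral_interval_sub_left hβ (hβ.mono_set (uIcc_subset_uIcc_left hs)),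
    sub_eq_add_neg, Real.exp_add]
  ring

theorem integral_mul_le_of_le_add_integral (hat : a ≤ t)
    (hu : ContinuousOn u (Icc a t)) (hβ : ContinuousOn β (Icc a t))
    (hβ0 : ∀ s ∈ Ioo a t, 0 ≤ β s) (hα : IntervalIntegrable α volume a t)
    (h : ∀ s ∈ Ioo a t, u s ≤ α s + ∫ r in a..s, β r * u r) :
    ∫ s in a..t, β s * u s ≤ ∫ s in a..t, α s * β s * Real.exp (∫ r in s..t, β r) := by
  set B : ℝ → ℝ := fun x => ∫ r in a..x, β r
  set v : ℝ → ℝ := fun x => ∫ r in a..x, β r * u r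
  have hβu : ContinuousOn (fun s => β s * u s) (Icc a t) := hβ.mul hu
  have hB : ContinuousOn B (Icc a t) := continuousOn_integral_of_continuousOn hat hβ
  have hφ : IntervalIntegrable (fun s => α s * β s * Real.exp (-B s)) volume a t := by
    simpa only [mul_assoc] using hα.mul_continuousOn
      ((uIcc_of_le hat).symm ▸ hβ.mul (Real.continuous_exp.comp_continuousOn hB.neg))
  have hderiv : ∀ x ∈ Ioo a t, HasDerivAt (fun y => Real.exp (-B y) * v y)
      (Real.exp (-B x) * (β x * u x - β x * v x)) x := fun x hx =>
    hasDerivAt_exp_neg_mul (hasDerivAt_integral_of_continuousOn hβ hx)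
      (hasDerivAt_integral_of_continuousOn hβu hx)
  have hbound : ∀ x ∈ Ioo a t,
      Real.exp (-B x) * (β x * u x - β x * v x) ≤ α x * β x * Real.exp (-B x) := by
    intro x hx
    calc Real.exp (-B x) * (β x * u x - β x * v x)
        = Real.exp (-B x) * (β x * (u x - v x)) := by ring
      _ ≤ Real.exp (-B x) * (β x * α x) := mul_le_mul_of_nonneg_left
          (mul_le_mul_of_nonneg_left (by linarith [h x hx]) (hβ0 x hx)) (Real.exp_pos _).le
      _ = α x * β x * Real.exp (-B x) := by ring
  have hvt : Real.exp (-B t) * v t ≤ ∫ s in a..t, α s * β s * Real.exp (-B s) := by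
    simpa [v] using intervalIntegral.sub_le_integral_of_hasDeriv_right_of_le hat
      ((Real.continuous_exp.comp_continuousOn hB.neg).mul
        (continuousOn_integral_of_continuousOn hat hβu))
      (fun x hx => (hderiv x hx).hasDerivWithinAt)
      ((intervalIntegrable_iff_integrableOn_Icc_of_le hat).1 hφ) hbound
  calc v t = Real.exp (B t) * (Real.exp (-B t) * v t) := by
        rw [← mul_assoc, ← Real.exp_add, add_neg_cancel, Real.exp_zero, one_mul]
    _ ≤ Real.exp (B t) * ∫ s in a..t, α s * β s * Real.exp (-B s) := by gcongr
    _ = _ := exp_integral_mul_integral_mul_exp_neg_integral _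
      (hβ.intervalIntegrable_of_Icc hat)

end Gronwall

open Gronwall in
theorem gronwall_integral_form_general
    (a b : ℝ) (u β α : ℝ → ℝ)
    (hu : ContinuousOn u (Icc a b))
    (hβ : ContinuousOn β (Icc a b))
    (hβ0 : ∀ t ∈ Icc a b, 0 ≤ β t)
    (hα : IntervalIntegrable α volume a b)
    (h : ∀ t ∈ Icc a b, u t ≤ α t + ∫ s in a..t, β s * u s) :
    ∀ t ∈ Icc a b,
      u t ≤ α t + ∫ s in a..t, α s * β s * Real.exp (∫ r in s..t, β r) := by
  intro t ht
  have hsub : Icc a t ⊆ Icc a b := Icc_subset_Icc le_rfl ht.2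
  have hsub' : Ioo a t ⊆ Icc a b := Ioo_subset_Icc_self.trans hsub
  calc u t ≤ α t + ∫ s in a..t, β s * u s := h t ht
    _ ≤ _ := add_le_add_right (integral_mul_le_of_le_add_integral ht.1 (hu.mono hsub)
      (hβ.mono hsub) (fun s hs => hβ0 s (hsub' hs))
      (hα.mono_set (uIcc_subset_uIcc_left (Icc_subset_uIcc ht)))
      (fun s hs => h s (hsub' hs))) _

/-- Integral form of Gronwall's inequality. -/
theorem gronwall_integral_form
    (a b : ℝ) (hab : a < b) (u β α : ℝ → ℝ)
    (hu : ContinuousOn u (Icc a b))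
    (hβ : ContinuousOn β (Icc a b))
    (hβ0 : ∀ t ∈ Icc a b, 0 ≤ β t)
    (hα : IntervalIntegrable α volume a b)
    (h : ∀ t ∈ Icc a b, u t ≤ α t + ∫ s in a..t, β s * u s) :
    ∀ t ∈ Icc a b,
      u t ≤ α t + ∫ s in a..t, α s * β s * Real.exp (∫ r in s..t, β r) :=
  gronwall_integral_form_general a b u β α hu hβ hβ0 hα h
end

section
/- Let α > 0 and λ ∈ ℝ. Then for every t > 0, the function t ↦ E_{α,1}(−λ t^α) is differentiable at t with derivative −λ t^{α−1} E_{α,α}(−λ t^α). -/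
/-!
Termwise, `d/dx E_{α,1}(x) = ∑ k x^{k-1} / Γ(αk + 1) = E_{α,α}(x) / α`, since
`Γ(αk + 1) = αk Γ(αk)`. Differentiating termwise is legitimate because the series is entire:
by the ratio test it suffices that `Γ(x) / Γ(x + a) → 0`, which follows from the log-convexity
of `Γ`. The chain rule with `d/dt (-λ t^α) = -λ α t^{α-1}` then gives the claim.
-/

open Real Set

/-- The (real-argument) Mittag-Leffler function `E_{α,β}(x) = ∑_{k=0}^∞ x^k / Γ(αk + β)`,
with the convention `1/Γ(w) = 0` at the poles of `Γ`. -/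
noncomputable def mittagLefflerReal (α β x : ℝ) : ℝ :=
  ∑' k : ℕ, x ^ k / Real.Gamma (α * k + β)

open Filter Topology FormalMultilinearSeries

namespace Real

theorem Gamma_add_one_sub_mul_rpow_le {y γ : ℝ} (hy : 0 < y) (hγ₀ : 0 < γ) (hγ₁ : γ < 1) :
    Gamma (y + 1 - γ) * y ^ γ ≤ Gamma (y + 1) := by
  have hconv := Gamma_mul_add_mul_le_rpow_Gamma_mul_rpow_Gamma hy (by linarith : 0 < y + 1)
    hγ₀ (by linarith : 0 < 1 - γ) (by ring)
  have hΓ : 0 < Gamma (y + 1) := Gamma_pos_of_pos (by linarith)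
  have hrhs : Gamma y ^ γ * Gamma (y + 1) ^ (1 - γ) = Gamma (y + 1) / y ^ γ := by
    have hΓy : Gamma y = Gamma (y + 1) / y :=
      eq_div_of_mul_eq hy.ne' ((mul_comm _ _).trans (Gamma_add_one hy.ne').symm)
    rw [hΓy, div_rpow hΓ.le hy.le, rpow_sub hΓ, rpow_one]
    field_simp
  rw [hrhs, show γ * y + (1 - γ) * (y + 1) = y + 1 - γ by ring] at hconv
  exact (le_div_iff₀ (by positivity)).mp hconv

theorem tendsto_Gamma_div_Gamma_add_atTop {a : ℝ} (ha : 0 < a) :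
    Tendsto (fun x => Gamma x / Gamma (x + a)) atTop (𝓝 0) := by
  -- `γ < 1` keeps both weights in `Gamma_mul_add_mul_le_rpow_Gamma_mul_rpow_Gamma` positive
  set γ := min a (1 / 2)
  have hγ₀ : 0 < γ := lt_min ha one_half_pos
  have hγ₁ : γ < 1 := (min_le_right _ _).trans_lt one_half_lt_one
  have hlim : Tendsto (fun x : ℝ => (x + γ - 1) ^ (-γ)) atTop (𝓝 0) :=
    (tendsto_rpow_neg_atTop hγ₀).comp <|
      (tendsto_atTop_add_const_right _ (γ - 1) tendsto_id).congr
        fun x => (add_sub_assoc x γ 1).symm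
  refine tendsto_of_tendsto_of_tendsto_of_le_of_le' tendsto_const_nhds hlim ?_ ?_
  · filter_upwards [eventually_gt_atTop 0] with x hx
    exact div_nonneg (Gamma_pos_of_pos hx).le (Gamma_pos_of_pos (by linarith)).le
  · filter_upwards [eventually_ge_atTop 2] with x hx
    have hy : 0 < x + γ - 1 := by linarith
    have hconv := Gamma_add_one_sub_mul_rpow_le hy hγ₀ hγ₁
    rw [show x + γ - 1 + 1 - γ = x by ring, show x + γ - 1 + 1 = x + γ by ring] at hconv
    have hmono : Gamma (x + γ) ≤ Gamma (x + a) :=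
      Gamma_strictMonoOn_Ici.monotoneOn (by simp only [mem_Ici]; linarith)
        (by simp only [mem_Ici]; linarith) (by linarith [min_le_left a (1 / 2)])
    calc Gamma x / Gamma (x + a) ≤ Gamma x / Gamma (x + γ) :=
          div_le_div_of_nonneg_left (Gamma_pos_of_pos (by linarith)).le
            (Gamma_pos_of_pos (by linarith)) hmono
      _ ≤ (x + γ - 1) ^ (-γ) := by
          rw [rpow_neg hy.le, div_le_iff₀ (Gamma_pos_of_pos (by linarith))]
          rwa [← div_eq_inv_mul, le_div_iff₀ (by positivity)]

end Real

section PowerSeries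

variable {𝕜 : Type*} [RCLike 𝕜] {c : ℕ → 𝕜}

theorem summable_norm_mul_pow_of_ofScalars_radius_eq_top
    (hc : (ofScalars 𝕜 c).radius = ⊤) (r : NNReal) :
    Summable fun n => ‖c n‖ * (r : ℝ) ^ n := by
  simpa only [ofScalars_norm] using
    (ofScalars 𝕜 c).summable_norm_mul_pow (hc ▸ ENNReal.coe_lt_top)

theorem hasDerivAt_tsum_mul_pow (hc : (ofScalars 𝕜 c).radius = ⊤) (x : 𝕜) :
    HasDerivAt (fun z => ∑' n, c n * z ^ n) (∑' n, c n * (n * x ^ (n - 1))) x := by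
  set R : ℝ := ‖x‖ + 1
  have hR : 1 ≤ R := by simp [R]
  have hu := summable_norm_mul_pow_of_ofScalars_radius_eq_top hc ⟨2 * R, by positivity⟩
  have hbound : ∀ n (y : 𝕜), y ∈ Metric.ball 0 R →
      ‖c n * (n * y ^ (n - 1))‖ ≤ ‖c n‖ * (2 * R) ^ n := by
    intro n y hy
    rw [mem_ball_zero_iff] at hy
    rw [norm_mul, norm_mul, norm_pow, RCLike.norm_natCast, mul_pow]
    gcongr ‖c n‖ * ?_
    have hn : (n : ℝ) ≤ 2 ^ n := by exact_mod_cast Nat.lt_two_pow_self.le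
    have hy' : ‖y‖ ^ (n - 1) ≤ R ^ n :=
      (pow_le_pow_left₀ (norm_nonneg y) hy.le _).trans (pow_le_pow_right₀ hR (n.sub_le 1))
    exact mul_le_mul hn hy' (by positivity) (by positivity)
  have hx : Summable fun n => c n * x ^ n :=
    .of_norm_bounded (summable_norm_mul_pow_of_ofScalars_radius_eq_top hc ‖x‖₊)
      fun n => by rw [norm_mul, norm_pow]; rfl
  have hxR : x ∈ Metric.ball 0 R := mem_ball_zero_iff.mpr (by simp [R])
  exact hasDerivAt_tsum_of_isPreconnected hu Metric.isOpen_ball (convex_ball 0 R).isPreconnected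
    (fun n y _ => (hasDerivAt_pow n y).const_mul (c n)) hbound hxR hx hxR

end PowerSeries

section MittagLeffler

variable {α : ℝ}

theorem mittagLefflerReal_eq_tsum (α β x : ℝ) :
    mittagLefflerReal α β x = ∑' k : ℕ, (Gamma (α * k + β))⁻¹ * x ^ k := by
  simp only [mittagLefflerReal, div_eq_inv_mul]

theorem ofScalars_radius_inv_Gamma_eq_top (hα : 0 < α) (β : ℝ) :
    (ofScalars ℝ fun k : ℕ => (Gamma (α * k + β))⁻¹).radius = ⊤ := by
  have harg : Tendsto (fun k : ℕ => α * k + β) atTop atTop :=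
    tendsto_atTop_add_const_right _ β (tendsto_natCast_atTop_atTop.const_mul_atTop hα)
  have hpos : ∀ᶠ k : ℕ in atTop, 0 < α * k + β := harg.eventually_gt_atTop 0
  refine ofScalars_radius_eq_top_of_tendsto _ _ ?_ ?_
  · filter_upwards [hpos] with k hk using inv_ne_zero (Gamma_pos_of_pos hk).ne'
  · refine ((tendsto_Gamma_div_Gamma_add_atTop hα).comp harg).congr' ?_
    filter_upwards [hpos] with k hk
    have hsucc : α * ((k + 1 : ℕ) : ℝ) + β = α * k + β + α := by push_cast; ring
    have hk' : 0 < α * k + β + α := by linarith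
    simp only [Function.comp_apply, Nat.succ_eq_add_one, hsucc, norm_inv, Real.norm_eq_abs,
      abs_of_pos (Gamma_pos_of_pos hk), abs_of_pos (Gamma_pos_of_pos hk'), inv_div_inv]

theorem hasDerivAt_mittagLefflerReal_one (hα : 0 < α) (x : ℝ) :
    HasDerivAt (mittagLefflerReal α 1) (mittagLefflerReal α α x / α) x := by
  have hsupp : (Function.support fun n : ℕ => (Gamma (α * n + 1))⁻¹ * (n * x ^ (n - 1))) ⊆
      range (· + 1) := fun n hn =>
    ⟨n - 1, Nat.sub_add_cancel (Nat.pos_of_ne_zero fun h0 => hn (by simp [h0]))⟩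
  have hterm : ∀ j : ℕ, (Gamma (α * (j + 1 : ℕ) + 1))⁻¹ * ((j + 1 : ℕ) * x ^ (j + 1 - 1)) =
      x ^ j / Gamma (α * j + α) / α := by
    intro j
    have hpos : 0 < α * j + α := by positivity
    rw [show α * ((j + 1 : ℕ) : ℝ) + 1 = (α * j + α) + 1 by push_cast; ring,
      Gamma_add_one hpos.ne', Nat.add_sub_cancel]
    push_cast
    field_simp
  have hderiv : ∑' n : ℕ, (Gamma (α * n + 1))⁻¹ * (n * x ^ (n - 1)) =
      mittagLefflerReal α α x / α := by
    rw [mittagLefflerReal, ← tsum_div_const, ← (add_left_injective 1).tsum_eq hsupp]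
    exact tsum_congr hterm
  simpa only [← mittagLefflerReal_eq_tsum, hderiv] using
    hasDerivAt_tsum_mul_pow (ofScalars_radius_inv_Gamma_eq_top hα 1) x

end MittagLeffler

/-- For `t > 0`, `d/dt E_{α,1}(-λ t^α) = -λ t^{α-1} E_{α,α}(-λ t^α)`. -/
theorem hasDerivAt_mittagLeffler_neg_lambda_rpow
    (α lam : ℝ) (hα : 0 < α) (t : ℝ) (ht : 0 < t) :
    HasDerivAt (fun s : ℝ => mittagLefflerReal α 1 (-lam * s ^ α))
      (-lam * t ^ (α - 1) * mittagLefflerReal α α (-lam * t ^ α)) t := by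
  have hinner : HasDerivAt (fun s : ℝ => -lam * s ^ α) (-lam * (α * t ^ (α - 1))) t :=
    (hasDerivAt_rpow_const (Or.inl ht.ne')).const_mul (-lam)
  refine ((hasDerivAt_mittagLefflerReal_one hα (-lam * t ^ α)).comp t hinner).congr_deriv ?_
  field_simp
end

section
/- Let X and Y be real normed vector spaces, let F : X → Y be Fréchet differentiable on X with derivative F', let f† ∈ X and L ≥ 0 satisfy the Lipschitz condition ‖F'(x) − F'(f†)‖ ≤ L ‖x − f†‖ for all x ∈ X (operator norm). Let g = F(f†), let g^δ ∈ Y with ‖g^δ − g‖ ≤ δ, and let f_k, f_{k+1} ∈ X satisfy the minimality relation ‖F'(f_k)(f_{k+1} − f_k) + F(f_k) − g^δ‖ ≤ ‖F'(f_k)(f† − f_k) + F(f_k) − g^δ‖. Then ‖F(f_{k+1}) − F(f†)‖ ≤ 2δ + 4L ‖f_k − f†‖² + (3L/2) ‖f_{k+1} − f†‖². -/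
/-!
Expand `F f_{k+1}` around `f†`: the Lipschitz bound on `F'` makes the Taylor remainder at most
`L/2 ‖f_{k+1} - f†‖²`, and moving the derivative from `f†` to `f_k` costs
`L ‖f_k - f†‖ ‖f_{k+1} - f†‖`. What is left, `F'(f_k)(f_{k+1} - f†)`, is the difference of the
linearized residuals of `f_{k+1}` and of `f†`. By minimality both are bounded by the second one,
which is `g^δ - g` plus the linearization error of `F` at `f_k` evaluated at `f†`, hence at most
`δ + 3L/2 ‖f_k - f†‖²`. The cross term `ab` is absorbed by `2ab ≤ a² + b²`.
-/

open Set

section CenterLipschitz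

variable {E G : Type*} [NormedAddCommGroup E] [NormedSpace ℝ E]
  [NormedAddCommGroup G] [NormedSpace ℝ G]
  {f : E → G} {f' : E → E →L[ℝ] G} {e u : E} {L : ℝ}

theorem norm_image_sub_image_sub_fderiv_center_le
    (hf : ∀ x ∈ segment ℝ e u, HasFDerivAt f (f' x) x)
    (hLip : ∀ x ∈ segment ℝ e u, ‖f' x - f' e‖ ≤ L * ‖x - e‖) :
    ‖f u - f e - f' e (u - e)‖ ≤ L / 2 * ‖u - e‖ ^ 2 := by
  set γ : ℝ → E := fun t => e + t • (u - e)
  have hγ_mem : ∀ t ∈ Icc (0 : ℝ) 1, γ t ∈ segment ℝ e u := fun t ht => by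
    rw [segment_eq_image']; exact ⟨t, ht, rfl⟩
  have hγ : ∀ t : ℝ, HasDerivAt γ (u - e) t := fun t =>
    (((hasDerivAt_id' t).smul_const (u - e)).const_add e).congr_deriv (one_smul ℝ _)
  set h : ℝ → G := fun t => f (γ t) - f e - t • f' e (u - e)
  have hh : ∀ t ∈ Icc (0 : ℝ) 1, HasDerivAt h ((f' (γ t) - f' e) (u - e)) t := fun t ht => by
    convert (((hf _ (hγ_mem t ht)).comp_hasDerivAt t (hγ t)).sub_const (f e)).sub
      ((hasDerivAt_id t).smul_const (f' e (u - e))) using 1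
    · rfl
    · simp [sub_apply]
  have hB : ∀ t : ℝ, HasDerivAt (fun t => L / 2 * ‖u - e‖ ^ 2 * t ^ 2)
      (L * ‖u - e‖ ^ 2 * t) t := fun t =>
    ((hasDerivAt_pow 2 t).const_mul (L / 2 * ‖u - e‖ ^ 2)).congr_deriv (by norm_num; ring)
  have bound : ∀ t ∈ Ico (0 : ℝ) 1, ‖(f' (γ t) - f' e) (u - e)‖ ≤ L * ‖u - e‖ ^ 2 * t :=
    fun t ht => by
      have hdist : ‖γ t - e‖ = t * ‖u - e‖ := by
        simp [γ, norm_smul, abs_of_nonneg ht.1]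
      calc ‖(f' (γ t) - f' e) (u - e)‖ ≤ ‖f' (γ t) - f' e‖ * ‖u - e‖ :=
            ContinuousLinearMap.le_opNorm _ _
        _ ≤ L * ‖γ t - e‖ * ‖u - e‖ := by
          gcongr; exact hLip _ (hγ_mem t (Ico_subset_Icc_self ht))
        _ = L * ‖u - e‖ ^ 2 * t := by rw [hdist]; ring
  have key := image_norm_le_of_norm_deriv_right_le_deriv_boundary
    (fun t ht => (hh t ht).continuousAt.continuousWithinAt)
    (fun t ht => (hh t (Ico_subset_Icc_self ht)).hasDerivWithinAt)
    (by simp [h, γ]) hB bound (right_mem_Icc.2 zero_le_one)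
  simpa [h, γ] using key

theorem norm_image_center_sub_image_sub_fderiv_le
    (hf : ∀ x ∈ segment ℝ e u, HasFDerivAt f (f' x) x)
    (hLip : ∀ x ∈ segment ℝ e u, ‖f' x - f' e‖ ≤ L * ‖x - e‖) :
    ‖f e - f u - f' u (e - u)‖ ≤ 3 * L / 2 * ‖u - e‖ ^ 2 := by
  have hswitch : ‖(f' u - f' e) (u - e)‖ ≤ L * ‖u - e‖ ^ 2 := by
    calc ‖(f' u - f' e) (u - e)‖ ≤ L * ‖u - e‖ * ‖u - e‖ :=
          ContinuousLinearMap.le_of_opNorm_le _ (hLip u (right_mem_segment ℝ e u)) _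
      _ = L * ‖u - e‖ ^ 2 := by ring
  have hsplit : f e - f u - f' u (e - u) =
      (f' u - f' e) (u - e) - (f u - f e - f' e (u - e)) := by
    simp only [sub_apply, map_sub]; abel
  calc ‖f e - f u - f' u (e - u)‖
      ≤ ‖(f' u - f' e) (u - e)‖ + ‖f u - f e - f' e (u - e)‖ := by
        rw [hsplit]; exact norm_sub_le _ _
    _ ≤ L * ‖u - e‖ ^ 2 + L / 2 * ‖u - e‖ ^ 2 :=
        add_le_add hswitch (norm_image_sub_image_sub_fderiv_center_le hf hLip)
    _ = 3 * L / 2 * ‖u - e‖ ^ 2 := by ring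

end CenterLipschitz

/-- Residual recursion for the Ivanov-regularized Newton iteration: if `f_{k+1}` has a
smaller linearized residual than the exact solution `f†`, then the nonlinear residual of
`f_{k+1}` is controlled by the noise level and the squared errors of `f_k` and `f_{k+1}`. -/
theorem newton_residual_recursion
    {X Y : Type*} [NormedAddCommGroup X] [NormedSpace ℝ X]
    [NormedAddCommGroup Y] [NormedSpace ℝ Y]
    (F : X → Y) (F' : X → X →L[ℝ] Y)
    (hF : ∀ x : X, HasFDerivAt F (F' x) x)
    (fdag : X) (L : ℝ) (hL : 0 ≤ L)
    (hLip : ∀ x : X, ‖F' x - F' fdag‖ ≤ L * ‖x - fdag‖)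
    (δ : ℝ) (gδ : Y) (hδ : ‖gδ - F fdag‖ ≤ δ) (fk fk1 : X)
    (hmin : ‖F' fk (fk1 - fk) + F fk - gδ‖ ≤ ‖F' fk (fdag - fk) + F fk - gδ‖) :
    ‖F fk1 - F fdag‖
      ≤ 2 * δ + 4 * L * ‖fk - fdag‖ ^ 2 + 3 * L / 2 * ‖fk1 - fdag‖ ^ 2 := by
  set a := ‖fk - fdag‖
  set b := ‖fk1 - fdag‖
  have hres : ‖F' fk (fdag - fk) + F fk - gδ‖ ≤ δ + 3 * L / 2 * a ^ 2 := by
    have hlin := norm_image_center_sub_image_sub_fderiv_le (u := fk)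
      (fun x _ => hF x) (fun x _ => hLip x)
    calc ‖F' fk (fdag - fk) + F fk - gδ‖
          = ‖(F fdag - gδ) - (F fdag - F fk - F' fk (fdag - fk))‖ := by congr 1; abel
      _ ≤ δ + 3 * L / 2 * a ^ 2 := by
          refine (norm_sub_le _ _).trans (add_le_add ?_ hlin)
          rwa [norm_sub_rev]
  have htaylor : ‖F fk1 - F fdag - F' fdag (fk1 - fdag)‖ ≤ L / 2 * b ^ 2 :=
    norm_image_sub_image_sub_fderiv_center_le (fun x _ => hF x) (fun x _ => hLip x)
  have hswitch : ‖(F' fdag - F' fk) (fk1 - fdag)‖ ≤ L * a * b :=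
    ContinuousLinearMap.le_of_opNorm_le _ (by rw [norm_sub_rev]; exact hLip fk) _
  have hsplit : F fk1 - F fdag = (F fk1 - F fdag - F' fdag (fk1 - fdag))
      + (F' fdag - F' fk) (fk1 - fdag)
      + ((F' fk (fk1 - fk) + F fk - gδ) - (F' fk (fdag - fk) + F fk - gδ)) := by
    simp only [sub_apply, map_sub]; abel
  calc ‖F fk1 - F fdag‖
      ≤ L / 2 * b ^ 2 + L * a * b + 2 * (δ + 3 * L / 2 * a ^ 2) := by
        rw [hsplit]
        refine (norm_add₃_le).trans (add_le_add (add_le_add htaylor hswitch) ?_)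
        exact (norm_sub_le _ _).trans (by linarith [hmin.trans hres, hres])
    _ ≤ 2 * δ + 4 * L * a ^ 2 + 3 * L / 2 * b ^ 2 := by
        nlinarith [mul_nonneg hL (sq_nonneg (a - b))]
end

section
/- Let X be a real Hilbert space and Y a real normed vector space, let F : X → Y be Fréchet differentiable on X with derivative F', let f†, f₀ ∈ X, L ≥ 0 and β ≥ 0 with βL < 1, and assume: (i) the Lipschitz condition ‖F'(x) − F'(f†)‖ ≤ L ‖x − f†‖ for all x ∈ X (operator norm); (ii) the variational source condition −⟨h, f† − f₀⟩ ≤ β ‖F'(f†) h‖ for all h ∈ X. Let δ ≥ 0, C ≥ 0 and f ∈ X satisfy ‖f − f₀‖² ≤ ‖f† − f₀‖² + Cδ. Then (1 − βL) ‖f − f†‖² ≤ Cδ + 2β ‖F(f) − F(f†)‖. -/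
/-!
Write `h = f - f†`. Expanding `‖f - f₀‖² = ‖h + (f† - f₀)‖²`, the assumption on `f` says
`‖h‖² ≤ Cδ - 2⟪h, f† - f₀⟫`, and the variational source condition turns this into
`‖h‖² ≤ Cδ + 2β‖F'(f†) h‖`. The Lipschitz bound on `F'` gives the Taylor estimate
`‖F(f) - F(f†) - F'(f†) h‖ ≤ L/2 ‖h‖²`, so `‖F'(f†) h‖ ≤ ‖F(f) - F(f†)‖ + L/2 ‖h‖²`, and the term
`βL‖h‖²` is moved to the left-hand side.
-/

open Set

theorem norm_image_sub_sub_fderiv_le_of_lipschitzAt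
    {X Y : Type*} [NormedAddCommGroup X] [NormedSpace ℝ X]
    [NormedAddCommGroup Y] [NormedSpace ℝ Y]
    {F : X → Y} {F' : X → X →L[ℝ] Y} (hF : ∀ x, HasFDerivAt F (F' x) x)
    {a : X} {L : ℝ} (hLip : ∀ x, ‖F' x - F' a‖ ≤ L * ‖x - a‖) (b : X) :
    ‖F b - F a - F' a (b - a)‖ ≤ L / 2 * ‖b - a‖ ^ 2 := by
  set v := b - a
  set g : ℝ → Y := fun t => F (a + t • v) - F a - t • F' a v with hg
  have hg' (t : ℝ) : HasDerivAt g ((F' (a + t • v) - F' a) v) t := by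
    have hpath : HasDerivAt (fun t : ℝ => a + t • v) v t := by
      simpa using ((hasDerivAt_id t).smul_const v).const_add a
    have hlin : HasDerivAt (fun t : ℝ => t • F' a v) (F' a v) t := by
      simpa using (hasDerivAt_id t).smul_const (F' a v)
    rw [sub_apply]
    exact (((hF _).comp_hasDerivAt t hpath).sub_const (F a)).sub hlin
  have hB (t : ℝ) : HasDerivAt (fun t => L * ‖v‖ ^ 2 * t ^ 2 / 2) (L * ‖v‖ ^ 2 * t) t :=
    (((hasDerivAt_pow 2 t).const_mul _).div_const 2).congr_deriv (by norm_num; ring)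
  have hbound : ∀ t ∈ Ico (0 : ℝ) 1, ‖(F' (a + t • v) - F' a) v‖ ≤ L * ‖v‖ ^ 2 * t := by
    intro t ht
    calc ‖(F' (a + t • v) - F' a) v‖ ≤ ‖F' (a + t • v) - F' a‖ * ‖v‖ :=
          ContinuousLinearMap.le_opNorm _ v
      _ ≤ L * ‖a + t • v - a‖ * ‖v‖ := by gcongr; exact hLip _
      _ = L * ‖v‖ ^ 2 * t := by
        rw [add_sub_cancel_left, norm_smul, Real.norm_of_nonneg ht.1]
        ring
  have hg1 := image_norm_le_of_norm_deriv_right_le_deriv_boundary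
    (fun t _ => (hg' t).continuousAt.continuousWithinAt) (fun t _ => (hg' t).hasDerivWithinAt)
    (by simp [hg]) hB hbound (right_mem_Icc.2 zero_le_one)
  simpa [hg, v, div_mul_eq_mul_div, mul_right_comm] using hg1

theorem norm_sub_sq_le_of_variational_source
    {X : Type*} [NormedAddCommGroup X] [InnerProductSpace ℝ X]
    {fdag f₀ : X} {ψ : X → ℝ} (hvsc : ∀ h, -inner ℝ h (fdag - f₀) ≤ ψ h)
    {f : X} {ε : ℝ} (hf : ‖f - f₀‖ ^ 2 ≤ ‖fdag - f₀‖ ^ 2 + ε) :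
    ‖f - fdag‖ ^ 2 ≤ ε + 2 * ψ (f - fdag) := by
  have hexpand := norm_add_sq_real (f - fdag) (fdag - f₀)
  rw [sub_add_sub_cancel] at hexpand
  linarith [hvsc (f - fdag)]

theorem variational_source_condition_error_estimate_general
    {X Y : Type*} [NormedAddCommGroup X] [InnerProductSpace ℝ X]
    [NormedAddCommGroup Y] [NormedSpace ℝ Y]
    (F : X → Y) (F' : X → X →L[ℝ] Y)
    (hF : ∀ x : X, HasFDerivAt F (F' x) x)
    (fdag f₀ : X) (L β : ℝ) (hβ : 0 ≤ β)
    (hLip : ∀ x : X, ‖F' x - F' fdag‖ ≤ L * ‖x - fdag‖)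
    (hvsc : ∀ h : X, -(inner ℝ h (fdag - f₀) : ℝ) ≤ β * ‖F' fdag h‖)
    (δ C : ℝ) (f : X)
    (hf : ‖f - f₀‖ ^ 2 ≤ ‖fdag - f₀‖ ^ 2 + C * δ) :
    (1 - β * L) * ‖f - fdag‖ ^ 2 ≤ C * δ + 2 * β * ‖F f - F fdag‖ := by
  have hsource := norm_sub_sq_le_of_variational_source hvsc hf
  have htaylor := norm_image_sub_sub_fderiv_le_of_lipschitzAt hF hLip f
  have hlinear : ‖F' fdag (f - fdag)‖ ≤ ‖F f - F fdag‖ + L / 2 * ‖f - fdag‖ ^ 2 := by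
    have := norm_sub_le (F f - F fdag) (F f - F fdag - F' fdag (f - fdag))
    rw [sub_sub_cancel] at this
    linarith
  linarith [mul_le_mul_of_nonneg_left hlinear hβ]

/-- Error estimate under a variational source condition: if `‖f - f₀‖² ≤ ‖f† - f₀‖² + Cδ`,
a Lipschitz condition on `F'` at `f†` and the variational source condition hold, then
`(1 - βL)‖f - f†‖² ≤ Cδ + 2β‖F(f) - F(f†)‖`. -/
theorem variational_source_condition_error_estimate
    {X Y : Type*} [NormedAddCommGroup X] [InnerProductSpace ℝ X] [CompleteSpace X]
    [NormedAddCommGroup Y] [NormedSpace ℝ Y]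
    (F : X → Y) (F' : X → X →L[ℝ] Y)
    (hF : ∀ x : X, HasFDerivAt F (F' x) x)
    (fdag f₀ : X) (L β : ℝ) (hL : 0 ≤ L) (hβ : 0 ≤ β) (hβL : β * L < 1)
    (hLip : ∀ x : X, ‖F' x - F' fdag‖ ≤ L * ‖x - fdag‖)
    (hvsc : ∀ h : X, -(inner ℝ h (fdag - f₀) : ℝ) ≤ β * ‖F' fdag h‖)
    (δ C : ℝ) (hδ : 0 ≤ δ) (hC : 0 ≤ C) (f : X)
    (hf : ‖f - f₀‖ ^ 2 ≤ ‖fdag - f₀‖ ^ 2 + C * δ) :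
    (1 - β * L) * ‖f - fdag‖ ^ 2 ≤ C * δ + 2 * β * ‖F f - F fdag‖ :=
  variational_source_condition_error_estimate_general F F' hF fdag f₀ L β hβ hLip hvsc δ C f hf
end
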